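/- Let τ₁, τ₂: C → A be twisting cochains and ψ: C → A a homotopy of twisting cochains from τ₁ to τ₂, i.e., a degree-0 map with D(ψ) = τ₁ ∪ ψ - ψ ∪ τ₂, ψ∘η = η, ε∘ψ = ε. Let M be a differential graded right C-comodule and N a differential graded left A-module. Then the cap operator ψ ∩ · : M ⊗_{τ₂} N → M ⊗_{τ₁} N is a chain map between the twisted tensor products, i.e., (d - τ₁∩·)∘(ψ∩·) = (ψ∩·)∘(d - τ₂∩·). -/

import Mathlib

open scoped TensorProduct DirectSum

noncomputable section
namespace HPT

/-- The sign `(-1)^k` for an integer `k`. -/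
def sgn (k : ℤ) : ℤ := (-1) ^ k.natAbs

variable {R : Type} [CommRing R]

section Graded

variable {M : Type} [AddCommGroup M] [Module R M]
variable {N : Type} [AddCommGroup N] [Module R N]

/-- `f : M → N` is homogeneous of degree `r` with respect to the gradings `ℳ`, `𝒩`. -/
def IsDeg (ℳ : ℤ → Submodule R M) (𝒩 : ℤ → Submodule R N) (r : ℤ) (f : M →ₗ[R] N) : Prop :=
  ∀ i : ℤ, ∀ x ∈ ℳ i, f x ∈ 𝒩 (i + r)

/-- The image of `p ⊗ q` inside `M ⊗ N`. -/
def tmul' (p : Submodule R M) (q : Submodule R N) : Submodule R (M ⊗[R] N) :=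
  LinearMap.range (TensorProduct.map p.subtype q.subtype)

/-- The sign operator multiplying a homogeneous element of degree `i` by `(-1)^(k*i)`;
used to implement the Eilenberg-Koszul sign convention. -/
def sgnOp (ℳ : ℤ → Submodule R M) [DirectSum.Decomposition ℳ] (k : ℤ) : M →ₗ[R] M :=
  (DirectSum.decomposeLinearEquiv ℳ).symm.toLinearMap ∘ₗ
    (DirectSum.toModule R ℤ (⨁ i, ↥(ℳ i)) fun i =>
      sgn (k * i) • DirectSum.lof R ℤ (fun j => ↥(ℳ j)) i) ∘ₗ
    (DirectSum.decomposeLinearEquiv ℳ).toLinearMap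

/-- The Hom-complex differential `D(f) = d_N ∘ f - (-1)^{|f|} f ∘ d_M` for `f` of degree `r`. -/
def DhGen (dM : M →ₗ[R] M) (dN : N →ₗ[R] N) (r : ℤ) (f : M →ₗ[R] N) : M →ₗ[R] N :=
  dN ∘ₗ f - sgn r • (f ∘ₗ dM)

/-- The cup pairing `f ∪ g = μ ∘ (f ⊗ g) ∘ Δ_M`, with the Koszul sign `(-1)^{|g| |m'|}`
implemented by the sign operator `σ` (to be taken to be `sgnOp ℳ |g|`). -/
def cupGen {C B : Type} [AddCommGroup C] [Module R C] [AddCommGroup B] [Module R B]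
    (ΔM : M →ₗ[R] M ⊗[R] C) (μ : N ⊗[R] B →ₗ[R] N) (σ : M →ₗ[R] M)
    (f : M →ₗ[R] N) (g : C →ₗ[R] B) : M →ₗ[R] N :=
  μ ∘ₗ TensorProduct.map f g ∘ₗ LinearMap.rTensor C σ ∘ₗ ΔM

/-- The cap operator `φ ∩ ·` on `M ⊗ N`, where `M` carries a comodule structure map
`ΔM : M → M ⊗ C` and `N` a module structure map `μ : A ⊗ N → N`; `k` is the degree of `φ`. -/
def cap {C A' : Type} [AddCommGroup C] [Module R C] [AddCommGroup A'] [Module R A']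
    (𝓜 : ℤ → Submodule R M) [DirectSum.Decomposition 𝓜]
    (ΔM : M →ₗ[R] M ⊗[R] C) (μ : A' ⊗[R] N →ₗ[R] N) (k : ℤ) (φ : C →ₗ[R] A') :
    M ⊗[R] N →ₗ[R] M ⊗[R] N :=
  LinearMap.lTensor M (μ ∘ₗ LinearMap.rTensor N φ) ∘ₗ
    (TensorProduct.assoc R M C N).toLinearMap ∘ₗ
    LinearMap.rTensor N (LinearMap.rTensor C (sgnOp 𝓜 k) ∘ₗ ΔM)

/-- The tensor-product differential `d ⊗ 1 + (-1)^{|m|} 1 ⊗ d` on `M ⊗ N`. -/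
def dTens (𝓜 : ℤ → Submodule R M) [DirectSum.Decomposition 𝓜]
    (dM : M →ₗ[R] M) (dN : N →ₗ[R] N) : M ⊗[R] N →ₗ[R] M ⊗[R] N :=
  LinearMap.rTensor N dM + LinearMap.lTensor M dN ∘ₗ LinearMap.rTensor N (sgnOp 𝓜 1)

end Graded

section Coalg

variable {C : Type} [AddCommGroup C] [Module R C]

/-- Differential graded coalgebra structure data (internally ℤ-graded). -/
structure IsDGCoalg (𝒞 : ℤ → Submodule R C) [DirectSum.Decomposition 𝒞]
    (Δ : C →ₗ[R] C ⊗[R] C) (εC : C →ₗ[R] R) (dC : C →ₗ[R] C) : Prop where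
  coassoc : (TensorProduct.assoc R C C C).toLinearMap ∘ₗ LinearMap.rTensor C Δ ∘ₗ Δ
      = LinearMap.lTensor C Δ ∘ₗ Δ
  counit_left : (TensorProduct.lid R C).toLinearMap ∘ₗ LinearMap.rTensor C εC ∘ₗ Δ
      = LinearMap.id
  counit_right : (TensorProduct.rid R C).toLinearMap ∘ₗ LinearMap.lTensor C εC ∘ₗ Δ
      = LinearMap.id
  comul_deg : ∀ n : ℤ, ∀ x ∈ 𝒞 n, Δ x ∈ ⨆ p : ℤ, tmul' (𝒞 p) (𝒞 (n - p))
  d_deg : IsDeg 𝒞 𝒞 (-1) dC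
  d_sq : dC ∘ₗ dC = 0
  comul_chain : Δ ∘ₗ dC =
      (LinearMap.rTensor C dC + LinearMap.lTensor C dC ∘ₗ LinearMap.rTensor C (sgnOp 𝒞 1)) ∘ₗ Δ
  counit_deg : ∀ i : ℤ, i ≠ 0 → ∀ x ∈ 𝒞 i, εC x = 0
  counit_chain : εC ∘ₗ dC = 0

/-- Coaugmentation data for a dg coalgebra: a grouplike cycle `e` of degree 0. -/
structure IsCoaug (Δ : C →ₗ[R] C ⊗[R] C) (εC : C →ₗ[R] R) (dC : C →ₗ[R] C)
    (𝒞 : ℤ → Submodule R C) (e : C) : Prop where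
  mem : e ∈ 𝒞 0
  counit : εC e = 1
  diag : Δ e = e ⊗ₜ[R] e
  d : dC e = 0

end Coalg

section Alg

variable {A : Type} [Ring A] [Algebra R A]

/-- Differential graded algebra structure (internally graded, multiplication of `A`). -/
structure IsDGAlg (𝒜 : ℤ → Submodule R A) (dA : A →ₗ[R] A) : Prop where
  d_deg : IsDeg 𝒜 𝒜 (-1) dA
  d_sq : dA ∘ₗ dA = 0
  leibniz : ∀ i : ℤ, ∀ x ∈ 𝒜 i, ∀ y : A, dA (x * y) = dA x * y + sgn i • (x * dA y)
  d_one : dA 1 = 0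

/-- Augmentation for a dg algebra. -/
structure IsAug (𝒜 : ℤ → Submodule R A) (dA : A →ₗ[R] A) (εA : A →ₐ[R] R) : Prop where
  vanish : ∀ i : ℤ, i ≠ 0 → ∀ x ∈ 𝒜 i, εA x = 0
  chain : ∀ x : A, εA (dA x) = 0

end Alg

section Conv

variable {C : Type} [AddCommGroup C] [Module R C]
variable {A : Type} [Ring A] [Algebra R A]

/-- The cup (convolution) product on `Hom(C, A)`; `s` is the degree of `g`. -/
def cup (𝒞 : ℤ → Submodule R C) [DirectSum.Decomposition 𝒞] (Δ : C →ₗ[R] C ⊗[R] C)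
    (s : ℤ) (f g : C →ₗ[R] A) : C →ₗ[R] A :=
  cupGen Δ (LinearMap.mul' R A) (sgnOp 𝒞 s) f g

/-- The convolution unit `η ∘ ε : C → A`. -/
def convOne (A : Type) [Ring A] [Algebra R A] (εC : C →ₗ[R] R) : C →ₗ[R] A :=
  Algebra.linearMap R A ∘ₗ εC

variable (𝒞 : ℤ → Submodule R C) [DirectSum.Decomposition 𝒞]

/-- `τ : C → A` is a twisting cochain. -/
structure IsTwisting (Δ : C →ₗ[R] C ⊗[R] C) (εC : C →ₗ[R] R) (dC : C →ₗ[R] C) (e : C)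
    (𝒜 : ℤ → Submodule R A) (dA : A →ₗ[R] A) (εA : A →ₐ[R] R) (τ : C →ₗ[R] A) : Prop where
  deg : IsDeg 𝒞 𝒜 (-1) τ
  eq : DhGen dC dA (-1) τ = cup 𝒞 Δ (-1) τ τ
  unit : τ e = 0
  counit : εA.toLinearMap ∘ₗ τ = 0

/-- `ψ` is a homotopy of twisting cochains from `τ₁` to `τ₂`. -/
structure IsTCHomotopy (Δ : C →ₗ[R] C ⊗[R] C) (εC : C →ₗ[R] R) (dC : C →ₗ[R] C) (e : C)
    (𝒜 : ℤ → Submodule R A) (dA : A →ₗ[R] A) (εA : A →ₐ[R] R)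
    (τ₁ τ₂ ψ : C →ₗ[R] A) : Prop where
  deg : IsDeg 𝒞 𝒜 0 ψ
  eq : DhGen dC dA 0 ψ = cup 𝒞 Δ 0 τ₁ ψ - cup 𝒞 Δ (-1) ψ τ₂
  unit : ψ e = 1
  counit : εA.toLinearMap ∘ₗ ψ = εC

end Conv

section Mod

variable {A : Type} [Ring A] [Algebra R A]
variable {N : Type} [AddCommGroup N] [Module R N]

/-- Differential graded left module over a dg algebra. -/
structure IsDGModLeft (𝒜 : ℤ → Submodule R A) (dA : A →ₗ[R] A)
    (𝒩 : ℤ → Submodule R N) (dN : N →ₗ[R] N) (μ : A ⊗[R] N →ₗ[R] N) : Prop where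
  one_act : ∀ x : N, μ (1 ⊗ₜ x) = x
  mul_act : ∀ (a b : A) (x : N), μ ((a * b) ⊗ₜ x) = μ (a ⊗ₜ μ (b ⊗ₜ x))
  act_deg : ∀ i j : ℤ, ∀ a ∈ 𝒜 i, ∀ x ∈ 𝒩 j, μ (a ⊗ₜ x) ∈ 𝒩 (i + j)
  d_deg : IsDeg 𝒩 𝒩 (-1) dN
  d_sq : dN ∘ₗ dN = 0
  chain : ∀ i : ℤ, ∀ a ∈ 𝒜 i, ∀ x : N,
    dN (μ (a ⊗ₜ x)) = μ (dA a ⊗ₜ x) + sgn i • μ (a ⊗ₜ dN x)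

/-- Differential graded right module over a dg algebra. -/
structure IsDGModRight (𝒜 : ℤ → Submodule R A) (dA : A →ₗ[R] A)
    (𝒩 : ℤ → Submodule R N) (dN : N →ₗ[R] N) (μ : N ⊗[R] A →ₗ[R] N) : Prop where
  one_act : ∀ x : N, μ (x ⊗ₜ 1) = x
  mul_act : ∀ (x : N) (a b : A), μ (x ⊗ₜ (a * b)) = μ (μ (x ⊗ₜ a) ⊗ₜ b)
  act_deg : ∀ i j : ℤ, ∀ x ∈ 𝒩 i, ∀ a ∈ 𝒜 j, μ (x ⊗ₜ a) ∈ 𝒩 (i + j)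
  d_deg : IsDeg 𝒩 𝒩 (-1) dN
  d_sq : dN ∘ₗ dN = 0
  chain : ∀ i j : ℤ, ∀ x ∈ 𝒩 i, ∀ a ∈ 𝒜 j,
    dN (μ (x ⊗ₜ a)) = μ (dN x ⊗ₜ a) + sgn i • μ (x ⊗ₜ dA a)

variable {C : Type} [AddCommGroup C] [Module R C]
variable {M : Type} [AddCommGroup M] [Module R M]

/-- Differential graded comodule over a dg coalgebra, with structure map `M → M ⊗ C`. -/
structure IsDGComod (𝒞 : ℤ → Submodule R C) (Δ : C →ₗ[R] C ⊗[R] C)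
    (εC : C →ₗ[R] R) (dC : C →ₗ[R] C)
    (𝓜 : ℤ → Submodule R M) [DirectSum.Decomposition 𝓜] (dM : M →ₗ[R] M)
    (ΔM : M →ₗ[R] M ⊗[R] C) : Prop where
  coassoc : (TensorProduct.assoc R M C C).toLinearMap ∘ₗ LinearMap.rTensor C ΔM ∘ₗ ΔM
      = LinearMap.lTensor M Δ ∘ₗ ΔM
  counit : (TensorProduct.rid R M).toLinearMap ∘ₗ LinearMap.lTensor M εC ∘ₗ ΔM = LinearMap.id
  deg : ∀ n : ℤ, ∀ x ∈ 𝓜 n, ΔM x ∈ ⨆ p : ℤ, tmul' (𝓜 p) (𝒞 (n - p))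
  d_deg : IsDeg 𝓜 𝓜 (-1) dM
  d_sq : dM ∘ₗ dM = 0
  chain : ΔM ∘ₗ dM =
    (LinearMap.rTensor C dM + LinearMap.lTensor M dC ∘ₗ LinearMap.rTensor C (sgnOp 𝓜 1)) ∘ₗ ΔM

end Mod

section Cocomplete

variable {C : Type} [AddCommGroup C] [Module R C]

/-- Iterated tensor powers of `C`. -/
def iTensM (R C : Type) [CommRing R] [AddCommGroup C] [Module R C] : ℕ → ModuleCat R
  | 0 => ModuleCat.of R C
  | n + 1 => ModuleCat.of R ((iTensM R C n) ⊗[R] C)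

/-- The reduced projection `id - η ∘ ε` associated to a coaugmentation. -/
def redProj (εC : C →ₗ[R] R) (e : C) : C →ₗ[R] C :=
  LinearMap.id - LinearMap.toSpanSingleton R C e ∘ₗ εC

/-- The reduced iterated comultiplication `C → (JC)^{⊗(n+1)}`. -/
def redIter (Δ : C →ₗ[R] C ⊗[R] C) (π' : C →ₗ[R] C) : (n : ℕ) → (C →ₗ[R] iTensM R C n)
  | 0 => π'
  | n + 1 => TensorProduct.map (redIter Δ π' n) π' ∘ₗ Δ

/-- The coaugmentation filtration `F_n C = ker (C → (JC)^{⊗(n+1)})`. -/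
def coaugFil (Δ : C →ₗ[R] C ⊗[R] C) (εC : C →ₗ[R] R) (e : C) (n : ℕ) : Submodule R C :=
  LinearMap.ker (redIter Δ (redProj εC e) n)

/-- The coaugmented coalgebra `C` is cocomplete: it is the union of the coaugmentation
filtration. -/
def Cocomplete (Δ : C →ₗ[R] C ⊗[R] C) (εC : C →ₗ[R] R) (e : C) : Prop :=
  ∀ x : C, ∃ n : ℕ, x ∈ coaugFil Δ εC e n

end Cocomplete

end HPT

/-!
Two identities for cap operators carry the proof. The Leibniz rule
`d ∘ (φ ∩ ·) = (-1)^|φ| (φ ∩ ·) ∘ d + (D φ) ∩ ·` follows from the compatibility of the coaction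
and of the action with the differentials, and `(φ ∩ ·) ∘ (φ' ∩ ·) = (φ ∪ φ') ∩ ·` follows from
coassociativity of the coaction (both sides are read off `(ΔM ⊗ 1) ΔM = (1 ⊗ Δ) ΔM`) and
associativity of the action. For `ψ` of degree `0` with `D ψ = τ₁ ∪ ψ - ψ ∪ τ₂` they give
`d ∘ (ψ ∩ ·) = (ψ ∩ ·) ∘ d + (τ₁ ∩ ·) ∘ (ψ ∩ ·) - (ψ ∩ ·) ∘ (τ₂ ∩ ·)`, which is the claim.
The Koszul signs are checked on homogeneous elementary tensors by a parity case split.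
-/

namespace HPT

variable {R : Type} [CommRing R]

lemma sgn_ite (k : ℤ) : sgn k = if Even k then 1 else -1 := by
  unfold sgn
  rcases Int.even_or_odd k with h | h
  · rw [if_pos h, Even.neg_one_pow (Int.natAbs_even.mpr h)]
  · rw [if_neg (Int.not_even_iff_odd.mpr h), Odd.neg_one_pow (Int.natAbs_odd.mpr h)]

section Graded

variable {M : Type} [AddCommGroup M] [Module R M]
variable {N : Type} [AddCommGroup N] [Module R N]

lemma sgnOp_of_mem (𝓜 : ℤ → Submodule R M) [DirectSum.Decomposition 𝓜]
    {i : ℤ} {x : M} (hx : x ∈ 𝓜 i) (k : ℤ) : sgnOp 𝓜 k x = sgn (k * i) • x := by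
  have hdec : DirectSum.decomposeLinearEquiv 𝓜 x
      = DirectSum.lof R ℤ (fun j => 𝓜 j) i ⟨x, hx⟩ := by
    rw [DirectSum.decomposeLinearEquiv_apply, DirectSum.decompose_of_mem 𝓜 hx,
      DirectSum.lof_eq_of]
  have hdec_symm : (DirectSum.decomposeLinearEquiv 𝓜).symm
      (DirectSum.lof R ℤ (fun j => 𝓜 j) i ⟨x, hx⟩) = x := by
    rw [DirectSum.lof_eq_of, DirectSum.decomposeLinearEquiv_symm_apply,
      DirectSum.decompose_symm_of]
  simp only [sgnOp, LinearMap.coe_comp, Function.comp_apply, LinearEquiv.coe_coe]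
  rw [hdec, DirectSum.toModule_lof, LinearMap.smul_apply, map_zsmul, hdec_symm]

@[elab_as_elim]
lemma iSup_tmul'_induction {f : ℤ → Submodule R M} {g : ℤ → Submodule R N}
    {P : M ⊗[R] N → Prop} (z : M ⊗[R] N) (hz : z ∈ ⨆ j, tmul' (f j) (g j)) (h0 : P 0)
    (hadd : ∀ x y, P x → P y → P (x + y)) (htmul : ∀ j, ∀ x ∈ f j, ∀ y ∈ g j, P (x ⊗ₜ y)) :
    P z := by
  refine Submodule.iSup_induction _ (motive := P) hz ?_ h0 hadd
  rintro j _ ⟨w, rfl⟩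
  induction w with
  | zero => simpa using h0
  | add a b ha hb => rw [map_add]; exact hadd _ _ ha hb
  | tmul x y => exact htmul j x.1 x.2 y.1 y.2

lemma dTens_tmul (𝓜 : ℤ → Submodule R M) [DirectSum.Decomposition 𝓜]
    (dM : M →ₗ[R] M) (dN : N →ₗ[R] N) {p : ℤ} {m : M} (hm : m ∈ 𝓜 p) (n : N) :
    dTens 𝓜 dM dN (m ⊗ₜ n) = dM m ⊗ₜ n + sgn p • (m ⊗ₜ dN n) := by
  simp only [dTens, LinearMap.add_apply, LinearMap.coe_comp, Function.comp_apply,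
    LinearMap.rTensor_tmul, LinearMap.lTensor_tmul, sgnOp_of_mem 𝓜 hm, one_mul,
    TensorProduct.smul_tmul']

end Graded

section Cap

variable {C : Type} [AddCommGroup C] [Module R C]
variable {A : Type} [Ring A] [Algebra R A]
variable {M : Type} [AddCommGroup M] [Module R M]
variable {N : Type} [AddCommGroup N] [Module R N]
variable {𝒞 : ℤ → Submodule R C}
variable (𝓜 : ℤ → Submodule R M) [DirectSum.Decomposition 𝓜]

def capTensor (μ : A ⊗[R] N →ₗ[R] N) (k : ℤ) (φ : C →ₗ[R] A) :
    (M ⊗[R] C) ⊗[R] N →ₗ[R] M ⊗[R] N :=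
  LinearMap.lTensor M (μ ∘ₗ LinearMap.rTensor N φ) ∘ₗ
    (TensorProduct.assoc R M C N).toLinearMap ∘ₗ
    LinearMap.rTensor N (LinearMap.rTensor C (sgnOp 𝓜 k))

lemma cap_tmul (ΔM : M →ₗ[R] M ⊗[R] C) (μ : A ⊗[R] N →ₗ[R] N) (k : ℤ) (φ : C →ₗ[R] A)
    (m : M) (n : N) : cap 𝓜 ΔM μ k φ (m ⊗ₜ n) = capTensor 𝓜 μ k φ (ΔM m ⊗ₜ n) := by
  simp only [cap, capTensor, LinearMap.coe_comp, Function.comp_apply, LinearMap.rTensor_tmul]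

lemma capTensor_tmul (μ : A ⊗[R] N →ₗ[R] N) (k : ℤ) (φ : C →ₗ[R] A)
    {p : ℤ} {m : M} (hm : m ∈ 𝓜 p) (c : C) (n : N) :
    capTensor 𝓜 μ k φ ((m ⊗ₜ c) ⊗ₜ n) = sgn (k * p) • (m ⊗ₜ[R] μ (φ c ⊗ₜ n)) := by
  simp only [capTensor, LinearMap.coe_comp, Function.comp_apply, LinearMap.rTensor_tmul,
    LinearEquiv.coe_coe, TensorProduct.assoc_tmul, LinearMap.lTensor_tmul,
    sgnOp_of_mem 𝓜 hm, TensorProduct.smul_tmul']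

lemma cap_sub (ΔM : M →ₗ[R] M ⊗[R] C) (μ : A ⊗[R] N →ₗ[R] N) (k : ℤ) (φ φ' : C →ₗ[R] A) :
    cap 𝓜 ΔM μ k (φ - φ') = cap 𝓜 ΔM μ k φ - cap 𝓜 ΔM μ k φ' := by
  rw [cap, cap, cap, LinearMap.rTensor_sub, LinearMap.comp_sub, LinearMap.lTensor_sub,
    LinearMap.sub_comp]

lemma tensor_ext_homogeneous {P : Type} [AddCommGroup P] [Module R P]
    {f g : M ⊗[R] N →ₗ[R] P} (h : ∀ i, ∀ m ∈ 𝓜 i, ∀ n, f (m ⊗ₜ n) = g (m ⊗ₜ n)) : f = g := by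
  refine TensorProduct.ext' fun m n => ?_
  induction m using DirectSum.Decomposition.inductionOn 𝓜 with
  | zero => simp
  | homogeneous m => exact h _ m.1 m.2 n
  | add m₁ m₂ h₁ h₂ => simp only [TensorProduct.add_tmul, map_add, h₁, h₂]

variable {𝒜 : ℤ → Submodule R A} {dA : A →ₗ[R] A} {𝒩 : ℤ → Submodule R N} {dN : N →ₗ[R] N}
  {μN : A ⊗[R] N →ₗ[R] N}

lemma dTens_capTensor_tmul_tmul (hN : IsDGModLeft 𝒜 dA 𝒩 dN μN) {dM : M →ₗ[R] M}
    (hdM : IsDeg 𝓜 𝓜 (-1) dM) (dC : C →ₗ[R] C) {k : ℤ} {φ : C →ₗ[R] A}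
    (hφ : IsDeg 𝒞 𝒜 k φ) {p q : ℤ} {m : M} (hm : m ∈ 𝓜 p) {c : C} (hc : c ∈ 𝒞 q) (n : N) :
    dTens 𝓜 dM dN (capTensor 𝓜 μN k φ ((m ⊗ₜ c) ⊗ₜ n))
      = sgn k • (capTensor 𝓜 μN k φ (dTens 𝓜 dM dC (m ⊗ₜ c) ⊗ₜ n)
          + sgn (p + q) • capTensor 𝓜 μN k φ ((m ⊗ₜ c) ⊗ₜ dN n))
        + capTensor 𝓜 μN (k - 1) (DhGen dC dA k φ) ((m ⊗ₜ c) ⊗ₜ n) := by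
  have hdm : dM m ∈ 𝓜 (p - 1) := hdM p m hm
  rw [dTens_tmul 𝓜 dM dC hm, TensorProduct.add_tmul,
    ← TensorProduct.smul_tmul' _ (m ⊗ₜ dC c)]
  simp only [dTens_tmul 𝓜 dM dN hm, map_add, map_zsmul, LinearMap.map_smul_of_tower,
    capTensor_tmul 𝓜 μN _ _ hm, capTensor_tmul 𝓜 μN _ _ hdm, hN.chain _ (φ c) (hφ q c hc),
    DhGen, LinearMap.sub_apply, LinearMap.smul_apply, LinearMap.comp_apply,
    TensorProduct.sub_tmul, map_sub, TensorProduct.tmul_sub, TensorProduct.tmul_add,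
    TensorProduct.tmul_smul, smul_add, smul_sub, smul_smul]
  rw [← TensorProduct.smul_tmul' (sgn k) (φ (dC c)) n, map_zsmul, TensorProduct.tmul_smul]
  match_scalars <;>
    · by_cases hk : Even k <;> by_cases hp : Even p <;> by_cases hq : Even q <;>
        simp [sgn_ite, parity_simps, hk, hp, hq, ← Int.not_even_iff_odd]

lemma dTens_comp_cap {Δ : C →ₗ[R] C ⊗[R] C} {εC : C →ₗ[R] R} {dC : C →ₗ[R] C}
    {dM : M →ₗ[R] M} {ΔM : M →ₗ[R] M ⊗[R] C} (hM : IsDGComod 𝒞 Δ εC dC 𝓜 dM ΔM)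
    (hN : IsDGModLeft 𝒜 dA 𝒩 dN μN) {k : ℤ} {φ : C →ₗ[R] A} (hφ : IsDeg 𝒞 𝒜 k φ) :
    dTens 𝓜 dM dN ∘ₗ cap 𝓜 ΔM μN k φ
      = sgn k • (cap 𝓜 ΔM μN k φ ∘ₗ dTens 𝓜 dM dN) + cap 𝓜 ΔM μN (k - 1) (DhGen dC dA k φ) := by
  refine tensor_ext_homogeneous 𝓜 fun i m hm n => ?_
  have hchain : ΔM (dM m) = dTens 𝓜 dM dC (ΔM m) := LinearMap.congr_fun hM.chain m
  simp only [LinearMap.comp_apply, LinearMap.add_apply, LinearMap.smul_apply, cap_tmul,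
    dTens_tmul 𝓜 dM dN hm, map_add, map_zsmul, hchain]
  refine iSup_tmul'_induction (ΔM m) (hM.deg i m hm) ?_ ?_ ?_
  · simp
  · intro x y hx hy
    simp only [TensorProduct.add_tmul, map_add, smul_add, hx, hy]
    abel
  · intro p m' hm' c hc
    rw [dTens_capTensor_tmul_tmul 𝓜 hN hM.d_deg dC hφ hm' hc, add_sub_cancel]

variable (𝒞) [DirectSum.Decomposition 𝒞]

def cupTensor (l : ℤ) (φ φ' : C →ₗ[R] A) : C ⊗[R] C →ₗ[R] A :=
  LinearMap.mul' R A ∘ₗ TensorProduct.map φ φ' ∘ₗ LinearMap.rTensor C (sgnOp 𝒞 l)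

lemma cupTensor_tmul (l : ℤ) (φ φ' : C →ₗ[R] A) {b : ℤ} {c' : C} (hc' : c' ∈ 𝒞 b) (c'' : C) :
    cupTensor 𝒞 l φ φ' (c' ⊗ₜ c'') = sgn (l * b) • (φ c' * φ' c'') := by
  simp only [cupTensor, LinearMap.coe_comp, Function.comp_apply, LinearMap.rTensor_tmul,
    sgnOp_of_mem 𝒞 hc', ← TensorProduct.smul_tmul', map_zsmul, TensorProduct.map_tmul,
    LinearMap.mul'_apply]

def capTensor₂ (μ : A ⊗[R] N →ₗ[R] N) (k l : ℤ) (φ φ' : C →ₗ[R] A) :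
    (M ⊗[R] (C ⊗[R] C)) ⊗[R] N →ₗ[R] M ⊗[R] N :=
  LinearMap.lTensor M ((μ ∘ₗ LinearMap.rTensor N φ) ∘ₗ
      LinearMap.lTensor C (μ ∘ₗ LinearMap.rTensor N φ') ∘ₗ
      (TensorProduct.assoc R C C N).toLinearMap) ∘ₗ
    (TensorProduct.assoc R M (C ⊗[R] C) N).toLinearMap ∘ₗ
    LinearMap.rTensor N (TensorProduct.map (sgnOp 𝓜 (k + l)) (LinearMap.rTensor C (sgnOp 𝒞 l)))

lemma capTensor₂_tmul (μ : A ⊗[R] N →ₗ[R] N) (k l : ℤ) (φ φ' : C →ₗ[R] A)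
    {a : ℤ} {m : M} (hm : m ∈ 𝓜 a) {b : ℤ} {c' : C} (hc' : c' ∈ 𝒞 b) (c'' : C) (n : N) :
    capTensor₂ 𝒞 𝓜 μ k l φ φ' ((m ⊗ₜ (c' ⊗ₜ c'')) ⊗ₜ n)
      = (sgn ((k + l) * a) * sgn (l * b)) • (m ⊗ₜ[R] μ (φ c' ⊗ₜ μ (φ' c'' ⊗ₜ n))) := by
  have hsign : LinearMap.rTensor N (TensorProduct.map (sgnOp 𝓜 (k + l))
        (LinearMap.rTensor C (sgnOp 𝒞 l))) ((m ⊗ₜ (c' ⊗ₜ c'')) ⊗ₜ n)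
      = (sgn ((k + l) * a) * sgn (l * b)) • ((m ⊗ₜ[R] (c' ⊗ₜ[R] c'')) ⊗ₜ[R] n) := by
    simp only [LinearMap.rTensor_tmul, TensorProduct.map_tmul, sgnOp_of_mem 𝓜 hm,
      sgnOp_of_mem 𝒞 hc', ← TensorProduct.smul_tmul', TensorProduct.tmul_smul, smul_smul,
      mul_comm (sgn (l * b))]
    rfl
  rw [capTensor₂, LinearMap.comp_apply, LinearMap.comp_apply, hsign, map_zsmul, map_zsmul]
  simp only [LinearEquiv.coe_coe, TensorProduct.assoc_tmul, LinearMap.lTensor_tmul,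
    LinearMap.comp_apply, LinearMap.rTensor_tmul]

lemma cap_capTensor_tmul_tmul {Δ : C →ₗ[R] C ⊗[R] C} {εC : C →ₗ[R] R} {dC : C →ₗ[R] C}
    {dM : M →ₗ[R] M} {ΔM : M →ₗ[R] M ⊗[R] C} (hM : IsDGComod 𝒞 Δ εC dC 𝓜 dM ΔM)
    (k l : ℤ) (φ φ' : C →ₗ[R] A) {p : ℤ} {m : M} (hm : m ∈ 𝓜 p) (c : C) (n : N) :
    cap 𝓜 ΔM μN k φ (capTensor 𝓜 μN l φ' ((m ⊗ₜ c) ⊗ₜ n))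
      = capTensor₂ 𝒞 𝓜 μN k l φ φ' (TensorProduct.assoc R M C C (ΔM m ⊗ₜ c) ⊗ₜ n) := by
  rw [capTensor_tmul 𝓜 μN l φ' hm, map_zsmul, cap_tmul]
  refine iSup_tmul'_induction (ΔM m) (hM.deg p m hm) ?_ ?_ ?_
  · simp
  · intro x y hx hy
    simp only [TensorProduct.add_tmul, map_add, smul_add, hx, hy]
  · intro a m' hm' c' hc'
    rw [capTensor_tmul 𝓜 μN k φ hm', TensorProduct.assoc_tmul,
      capTensor₂_tmul 𝒞 𝓜 μN k l φ φ' hm' hc', smul_smul]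
    congr 1
    by_cases hk : Even k <;> by_cases hl : Even l <;> by_cases hp : Even p <;>
      by_cases ha : Even a <;> simp [sgn_ite, parity_simps, hk, hl, hp, ha]

lemma capTensor₂_lTensor_comul {Δ : C →ₗ[R] C ⊗[R] C} {εC : C →ₗ[R] R} {dC : C →ₗ[R] C}
    (hC : IsDGCoalg 𝒞 Δ εC dC) (hN : IsDGModLeft 𝒜 dA 𝒩 dN μN) (k l : ℤ) (φ φ' : C →ₗ[R] A)
    {p : ℤ} {m : M} (hm : m ∈ 𝓜 p) {q : ℤ} {c : C} (hc : c ∈ 𝒞 q) (n : N) :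
    capTensor₂ 𝒞 𝓜 μN k l φ φ' ((m ⊗ₜ Δ c) ⊗ₜ n)
      = capTensor 𝓜 μN (k + l) (cup 𝒞 Δ l φ φ') ((m ⊗ₜ c) ⊗ₜ n) := by
  rw [capTensor_tmul 𝓜 μN _ _ hm]
  change _ = _ • (m ⊗ₜ μN (cupTensor 𝒞 l φ φ' (Δ c) ⊗ₜ n))
  refine iSup_tmul'_induction (Δ c) (hC.comul_deg q c hc) ?_ ?_ ?_
  · simp
  · intro x y hx hy
    simp only [TensorProduct.tmul_add, TensorProduct.add_tmul, map_add, smul_add, hx, hy]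
  · intro b c' hc' c'' _
    rw [capTensor₂_tmul 𝒞 𝓜 μN k l φ φ' hm hc', cupTensor_tmul 𝒞 l φ φ' hc',
      ← TensorProduct.smul_tmul', map_zsmul, hN.mul_act, TensorProduct.tmul_smul, smul_smul]

lemma cap_comp_cap {Δ : C →ₗ[R] C ⊗[R] C} {εC : C →ₗ[R] R} {dC : C →ₗ[R] C}
    {dM : M →ₗ[R] M} {ΔM : M →ₗ[R] M ⊗[R] C} (hC : IsDGCoalg 𝒞 Δ εC dC)
    (hM : IsDGComod 𝒞 Δ εC dC 𝓜 dM ΔM) (hN : IsDGModLeft 𝒜 dA 𝒩 dN μN)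
    (k l : ℤ) (φ φ' : C →ₗ[R] A) :
    cap 𝓜 ΔM μN k φ ∘ₗ cap 𝓜 ΔM μN l φ' = cap 𝓜 ΔM μN (k + l) (cup 𝒞 Δ l φ φ') := by
  refine tensor_ext_homogeneous 𝓜 fun i m hm n => ?_
  have hcoassoc : TensorProduct.assoc R M C C (LinearMap.rTensor C ΔM (ΔM m))
      = LinearMap.lTensor M Δ (ΔM m) := LinearMap.congr_fun hM.coassoc m
  calc cap 𝓜 ΔM μN k φ (cap 𝓜 ΔM μN l φ' (m ⊗ₜ n))
      = capTensor₂ 𝒞 𝓜 μN k l φ φ'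
          (TensorProduct.assoc R M C C (LinearMap.rTensor C ΔM (ΔM m)) ⊗ₜ n) := by
        rw [cap_tmul]
        refine iSup_tmul'_induction (ΔM m) (hM.deg i m hm) ?_ ?_ ?_
        · simp
        · intro x y hx hy
          simp only [TensorProduct.add_tmul, map_add, hx, hy]
        · intro p m' hm' c _
          rw [cap_capTensor_tmul_tmul 𝒞 𝓜 hM k l φ φ' hm', LinearMap.rTensor_tmul]
    _ = cap 𝓜 ΔM μN (k + l) (cup 𝒞 Δ l φ φ') (m ⊗ₜ n) := by
        rw [hcoassoc, cap_tmul]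
        refine iSup_tmul'_induction (ΔM m) (hM.deg i m hm) ?_ ?_ ?_
        · simp
        · intro x y hx hy
          simp only [TensorProduct.add_tmul, map_add, hx, hy]
        · intro p m' hm' c hc
          rw [LinearMap.lTensor_tmul, capTensor₂_lTensor_comul 𝒞 𝓜 hC hN k l φ φ' hm' hc]

end Cap

end HPT

open HPT in
theorem statement4_general
    {R : Type} [CommRing R]
    {C : Type} [AddCommGroup C] [Module R C]
    (𝒞 : ℤ → Submodule R C) [DirectSum.Decomposition 𝒞]
    (Δ : C →ₗ[R] C ⊗[R] C) (εC : C →ₗ[R] R) (dC : C →ₗ[R] C) (e : C)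
    {A : Type} [Ring A] [Algebra R A]
    (𝒜 : ℤ → Submodule R A) (dA : A →ₗ[R] A) (εA : A →ₐ[R] R)
    {M : Type} [AddCommGroup M] [Module R M]
    (𝓜 : ℤ → Submodule R M) [DirectSum.Decomposition 𝓜]
    (dM : M →ₗ[R] M) (ΔM : M →ₗ[R] M ⊗[R] C)
    {N : Type} [AddCommGroup N] [Module R N]
    (𝒩 : ℤ → Submodule R N) (dN : N →ₗ[R] N) (μN : A ⊗[R] N →ₗ[R] N)
    (hC : IsDGCoalg 𝒞 Δ εC dC)
    (hM : IsDGComod 𝒞 Δ εC dC 𝓜 dM ΔM)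
    (hN : IsDGModLeft 𝒜 dA 𝒩 dN μN)
    (τ₁ τ₂ ψ : C →ₗ[R] A)
    (hψ : IsTCHomotopy 𝒞 Δ εC dC e 𝒜 dA εA τ₁ τ₂ ψ) :
    (dTens 𝓜 dM dN - cap 𝓜 ΔM μN (-1) τ₁) ∘ₗ cap 𝓜 ΔM μN 0 ψ
      = cap 𝓜 ΔM μN 0 ψ ∘ₗ (dTens 𝓜 dM dN - cap 𝓜 ΔM μN (-1) τ₂) := by
  have hd := dTens_comp_cap 𝓜 hM hN hψ.deg
  rw [hψ.eq, cap_sub] at hd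
  rw [LinearMap.sub_comp, LinearMap.comp_sub, hd, cap_comp_cap 𝒞 𝓜 hC hM hN,
    cap_comp_cap 𝒞 𝓜 hC hM hN]
  norm_num [sgn]
  abel

open HPT in
/-- a homotopy `ψ : τ₁ ≃ τ₂` of twisting cochains induces a chain map
`ψ ∩ · : M ⊗_{τ₂} N → M ⊗_{τ₁} N` between the twisted tensor products. -/
theorem statement4
    {R : Type} [CommRing R]
    {C : Type} [AddCommGroup C] [Module R C]
    (𝒞 : ℤ → Submodule R C) [DirectSum.Decomposition 𝒞]
    (Δ : C →ₗ[R] C ⊗[R] C) (εC : C →ₗ[R] R) (dC : C →ₗ[R] C) (e : C)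
    {A : Type} [Ring A] [Algebra R A]
    (𝒜 : ℤ → Submodule R A) [GradedAlgebra 𝒜] (dA : A →ₗ[R] A) (εA : A →ₐ[R] R)
    {M : Type} [AddCommGroup M] [Module R M]
    (𝓜 : ℤ → Submodule R M) [DirectSum.Decomposition 𝓜]
    (dM : M →ₗ[R] M) (ΔM : M →ₗ[R] M ⊗[R] C)
    {N : Type} [AddCommGroup N] [Module R N]
    (𝒩 : ℤ → Submodule R N) (dN : N →ₗ[R] N) (μN : A ⊗[R] N →ₗ[R] N)
    (hC : IsDGCoalg 𝒞 Δ εC dC) (hCe : IsCoaug Δ εC dC 𝒞 e)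
    (hA : IsDGAlg 𝒜 dA) (hAug : IsAug 𝒜 dA εA)
    (hM : IsDGComod 𝒞 Δ εC dC 𝓜 dM ΔM)
    (hN : IsDGModLeft 𝒜 dA 𝒩 dN μN)
    (τ₁ τ₂ ψ : C →ₗ[R] A)
    (hτ₁ : IsTwisting 𝒞 Δ εC dC e 𝒜 dA εA τ₁)
    (hτ₂ : IsTwisting 𝒞 Δ εC dC e 𝒜 dA εA τ₂)
    (hψ : IsTCHomotopy 𝒞 Δ εC dC e 𝒜 dA εA τ₁ τ₂ ψ) :
    (dTens 𝓜 dM dN - cap 𝓜 ΔM μN (-1) τ₁) ∘ₗ cap 𝓜 ΔM μN 0 ψ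
      = cap 𝓜 ΔM μN 0 ψ ∘ₗ (dTens 𝓜 dM dN - cap 𝓜 ΔM μN (-1) τ₂) :=
  statement4_general 𝒞 Δ εC dC e 𝒜 dA εA 𝓜 dM ΔM 𝒩 dN μN hC hM hN τ₁ τ₂ ψ hψ
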